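/- Let X be a Banach space, p ∈ (1,2], and let (S,Σ,μ) be a σ-finite measure space which contains, for every N ∈ ℤ_+, N pairwise disjoint measurable sets of equal finite positive measure. If there exists a constant C ≥ 0 such that for every N ≥ 1, all identically distributed f_1,…,f_N ∈ L^{p,1}(S) (i.e. μ(|f_n|>t) = μ(|f_1|>t) for all t>0 and all n) and all x_1,…,x_N ∈ X one has ‖f_1‖_{L^{p,∞}(S)} · (E‖Σ_{n=1}^N r_n x_n‖_X²)^{1/2} ≤ C · ( ∫_S ( E‖Σ_{n=1}^N r_n f_n(s) x_n‖_X² )^{p/2} dμ(s) )^{1/p}, then X has type p. -/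

import Mathlib

open MeasureTheory ENNReal

noncomputable section

/-- The Rademacher average `𝔼 ‖∑ₙ rₙ xₙ‖²`, realized concretely as the average over all
sign choices `ε : Fin N → Bool`.  For a Rademacher sequence `(rₙ)` on any probability space
this equals `𝔼 ‖∑ₙ rₙ xₙ‖²`. -/
def radAvg {E : Type*} [NormedAddCommGroup E] [NormedSpace ℝ E] {N : ℕ} (x : Fin N → E) : ℝ :=
  (∑ ε : Fin N → Bool, ‖∑ n, (if ε n then (1 : ℝ) else -1) • x n‖ ^ 2) / 2 ^ N

/-- `X` has (Rademacher) type `p`: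
`(𝔼 ‖∑ rₙ xₙ‖²)^(1/2) ≤ C (∑ ‖xₙ‖^p)^(1/p)`. -/
def HasRademacherType (X : Type*) [NormedAddCommGroup X] [NormedSpace ℝ X] (p : ℝ) : Prop :=
  ∃ C : ℝ, 0 ≤ C ∧ ∀ (N : ℕ) (x : Fin N → X),
    Real.sqrt (radAvg x) ≤ C * (∑ n, ‖x n‖ ^ p) ^ (1 / p)

/-- `X` has (Rademacher) cotype `q ∈ [2,∞]`:
`(∑ ‖xₙ‖^q)^(1/q) ≤ C (𝔼 ‖∑ rₙ xₙ‖²)^(1/2)` (with `max ‖xₙ‖` on the left if `q = ∞`). -/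
def HasRademacherCotype (X : Type*) [NormedAddCommGroup X] [NormedSpace ℝ X] (q : ℝ≥0∞) : Prop :=
  ∃ C : ℝ, 0 ≤ C ∧ ∀ (N : ℕ) (x : Fin N → X),
    (if q = ∞ then ⨆ n, ‖x n‖ else (∑ n, ‖x n‖ ^ q.toReal) ^ (1 / q.toReal))
      ≤ C * Real.sqrt (radAvg x)

lemma radAvg_nonneg {E : Type*} [NormedAddCommGroup E] [NormedSpace ℝ E] {N : ℕ}
    (x : Fin N → E) : 0 ≤ radAvg x := by
  unfold radAvg; positivity

lemma radAvg_single {E : Type*} [NormedAddCommGroup E] [NormedSpace ℝ E] {N : ℕ}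
    (m : Fin N) (v : E) (y : Fin N → E) (hy : ∀ n, y n = if n = m then v else 0) :
    radAvg y = ‖v‖ ^ 2 := by
  unfold radAvg
  have h1 : ∀ ε : Fin N → Bool,
      ‖∑ n, (if ε n then (1 : ℝ) else -1) • y n‖ ^ 2 = ‖v‖ ^ 2 := by
    intro ε
    have : ∑ n, (if ε n then (1 : ℝ) else -1) • y n = (if ε m then (1 : ℝ) else -1) • v := by
      rw [Finset.sum_eq_single m]
      · rw [hy m, if_pos rfl]
      · intro n _ hn
        rw [hy n, if_neg hn, smul_zero]
      · intro h; exact absurd (Finset.mem_univ m) h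
    rw [this, norm_smul]
    rcases Bool.eq_false_or_eq_true (ε m) with h | h <;> simp [h]
  simp_rw [h1]
  rw [Finset.sum_const, Finset.card_univ]
  simp [Fintype.card_fun]

lemma radAvg_zero {E : Type*} [NormedAddCommGroup E] [NormedSpace ℝ E] {N : ℕ} :
    radAvg (fun _ : Fin N => (0 : E)) = 0 := by
  simp [radAvg]

/-- Lemma 3.5(3): if the estimate of Lemma 3.5(1) holds on a measure space containing
`N` disjoint sets of equal finite positive measure for every `N`, then `X` has type `p`. -/
theorem statement6 {X : Type*} [NormedAddCommGroup X] [NormedSpace ℝ X] [CompleteSpace X]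
    {S : Type*} [MeasurableSpace S] (μ : Measure S) [SigmaFinite μ]
    (p : ℝ) (hp₁ : 1 < p) (hp₂ : p ≤ 2)
    (hS : ∀ N : ℕ, 0 < N → ∃ A : Fin N → Set S, (∀ n, MeasurableSet (A n)) ∧
      (Pairwise fun i j => Disjoint (A i) (A j)) ∧
      ∃ c : ℝ≥0∞, 0 < c ∧ c < ∞ ∧ ∀ n, μ (A n) = c)
    (C : ℝ) (hC : 0 ≤ C)
    (hineq : ∀ (N : ℕ) (hN : 0 < N) (f : Fin N → S → ℝ) (x : Fin N → X),
      (∀ n, Measurable (f n)) →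
      (∀ n, ∀ t > (0 : ℝ), μ {s | t < |f n s|} = μ {s | t < |f ⟨0, hN⟩ s|}) →
      (∫⁻ t in Set.Ioi (0 : ℝ), μ {s | t < |f ⟨0, hN⟩ s|} ^ (1 / p) < ∞) →
      (⨆ t ∈ Set.Ioi (0 : ℝ), ENNReal.ofReal t * μ {s | t < |f ⟨0, hN⟩ s|} ^ (1 / p)) *
          ENNReal.ofReal (Real.sqrt (radAvg x)) ≤
        ENNReal.ofReal C *
          eLpNorm (fun s => Real.sqrt (radAvg fun n => f n s • x n)) (ENNReal.ofReal p) μ) :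
    HasRademacherType X p := by
  have hp0 : (0 : ℝ) < p := lt_trans one_pos hp₁
  have hip0 : (0 : ℝ) < 1 / p := by positivity
  refine ⟨2 * C, by positivity, ?_⟩
  intro N x
  rcases Nat.eq_zero_or_pos N with h0 | hN
  · subst h0
    have hz : (0:ℝ) ^ p⁻¹ = 0 := Real.zero_rpow (inv_ne_zero hp0.ne')
    simp [radAvg, hz]
  obtain ⟨A, hA, hdisj, c, hc0, hctop, hμA⟩ := hS N hN
  set f : Fin N → S → ℝ := fun n => (A n).indicator (fun _ => 1) with hf
  have hfmeas : ∀ n, Measurable (f n) := fun n => measurable_const.indicator (hA n)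
  -- the superlevel sets
  have hμset : ∀ (n : Fin N) (t : ℝ), 0 < t → μ {s | t < |f n s|} = if t < 1 then c else 0 := by
    intro n t ht
    have hset : {s | t < |f n s|} = if t < 1 then A n else ∅ := by
      ext s
      simp only [Set.mem_setOf_eq, hf, Set.indicator_apply]
      by_cases hs : s ∈ A n <;> by_cases h1 : t < 1 <;>
        simp [hs, h1, abs_of_nonneg, le_of_lt ht] <;> linarith
    rw [hset]
    split_ifs
    · exact hμA n
    · exact measure_empty
  have hident : ∀ n, ∀ t > (0 : ℝ), μ {s | t < |f n s|} = μ {s | t < |f ⟨0, hN⟩ s|} := by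
    intro n t ht
    rw [hμset n t ht, hμset ⟨0, hN⟩ t ht]
  have hint : ∫⁻ t in Set.Ioi (0 : ℝ), μ {s | t < |f ⟨0, hN⟩ s|} ^ (1 / p) < ∞ := by
    have heq : ∫⁻ t in Set.Ioi (0 : ℝ), μ {s | t < |f ⟨0, hN⟩ s|} ^ (1 / p)
        = ∫⁻ t in Set.Ioi (0 : ℝ), (Set.Ioo (0 : ℝ) 1).indicator (fun _ => c ^ (1 / p)) t := by
      refine setLIntegral_congr_fun measurableSet_Ioi (fun t ht => ?_)
      rw [hμset ⟨0, hN⟩ t ht]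
      by_cases h1 : t < 1
      · rw [if_pos h1, Set.indicator_of_mem (Set.mem_Ioo.mpr ⟨Set.mem_Ioi.mp ht, h1⟩)]
      · rw [if_neg h1, Set.indicator_of_notMem (fun h => h1 h.2),
          ENNReal.zero_rpow_of_pos hip0]
    rw [heq, lintegral_indicator measurableSet_Ioo, setLIntegral_const]
    refine ENNReal.mul_lt_top (ENNReal.rpow_lt_top_of_nonneg (le_of_lt hip0) hctop.ne) ?_
    exact lt_of_le_of_lt (Measure.restrict_apply_le _ _) (by simp)
  -- lower bound for the sup
  have hsup : ENNReal.ofReal (1 / 2) * c ^ (1 / p)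
      ≤ ⨆ t ∈ Set.Ioi (0 : ℝ), ENNReal.ofReal t * μ {s | t < |f ⟨0, hN⟩ s|} ^ (1 / p) := by
    have h12 : (1 / 2 : ℝ) ∈ Set.Ioi (0 : ℝ) := by norm_num
    have hle := le_iSup (fun t : ℝ => ⨆ _ : t ∈ Set.Ioi (0 : ℝ),
      ENNReal.ofReal t * μ {s | t < |f ⟨0, hN⟩ s|} ^ (1 / p)) (1 / 2 : ℝ)
    rw [iSup_pos h12] at hle
    refine le_trans ?_ hle
    rw [hμset ⟨0, hN⟩ (1 / 2) (by norm_num), if_pos (by norm_num)]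
  -- the integrand family at a point of A m
  have hg : ∀ (s : S) (m : Fin N), s ∈ A m →
      (fun n => f n s • x n) = fun n => if n = m then x m else 0 := by
    intro s m hs
    funext n
    by_cases h : n = m
    · subst h
      simp [hf, Set.indicator_of_mem hs]
    · have hs' : s ∉ A n := fun hsn => Set.disjoint_left.mp (hdisj h) hsn hs
      simp [hf, Set.indicator_of_notMem hs', h]
  -- upper bound for the Lp norm
  set T : ℝ≥0∞ := ∑ n, (‖x n‖₊ : ℝ≥0∞) ^ p with hT
  have hlp : eLpNorm (fun s => Real.sqrt (radAvg fun n => f n s • x n)) (ENNReal.ofReal p) μ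
      ≤ c ^ (1 / p) * T ^ (1 / p) := by
    rw [eLpNorm_eq_lintegral_rpow_enorm_toReal (by simp [ENNReal.ofReal_pos.mpr hp0, ne_of_gt])
      ENNReal.ofReal_ne_top, ENNReal.toReal_ofReal (le_of_lt hp0)]
    simp only [enorm_eq_nnnorm]
    have hpt : ∀ s : S, (‖Real.sqrt (radAvg fun n => f n s • x n)‖₊ : ℝ≥0∞) ^ p
        ≤ ∑ m, (A m).indicator (fun _ => (‖x m‖₊ : ℝ≥0∞) ^ p) s := by
      intro s
      by_cases hex : ∃ m, s ∈ A m
      · obtain ⟨m, hs⟩ := hex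
        have : Real.sqrt (radAvg fun n => f n s • x n) = ‖x m‖ := by
          rw [radAvg_single m (x m) _ (fun n => congrFun (hg s m hs) n)]
          exact Real.sqrt_sq (norm_nonneg _)
        rw [this, nnnorm_norm]
        refine Finset.single_le_sum (f := fun m => (A m).indicator
          (fun _ => (‖x m‖₊ : ℝ≥0∞) ^ p) s) (fun i _ => zero_le) (Finset.mem_univ m)
          |>.trans_eq' ?_ |>.trans_eq rfl
        rw [Set.indicator_of_mem hs]
      · push_neg at hex
        have : (fun n => f n s • x n) = fun _ : Fin N => (0 : X) := by
          funext n
          simp [hf, Set.indicator_of_notMem (hex n)]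
        rw [this, radAvg_zero]
        simp [ENNReal.zero_rpow_of_pos hp0]
    calc (∫⁻ s, (‖Real.sqrt (radAvg fun n => f n s • x n)‖₊ : ℝ≥0∞) ^ p ∂μ) ^ (1 / p)
        ≤ (∫⁻ s, ∑ m, (A m).indicator (fun _ => (‖x m‖₊ : ℝ≥0∞) ^ p) s ∂μ) ^ (1 / p) := by
          exact ENNReal.rpow_le_rpow (lintegral_mono hpt) (le_of_lt hip0)
      _ = (∑ m, (‖x m‖₊ : ℝ≥0∞) ^ p * μ (A m)) ^ (1 / p) := by
          rw [lintegral_finset_sum _ (fun m _ => (measurable_const.indicator (hA m)))]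
          congr 1
          refine Finset.sum_congr rfl fun m _ => ?_
          rw [lintegral_indicator (hA m), setLIntegral_const]
      _ = (c * T) ^ (1 / p) := by
          congr 1
          simp_rw [hμA]
          rw [hT, Finset.mul_sum]
          exact Finset.sum_congr rfl fun m _ => mul_comm _ _
      _ = c ^ (1 / p) * T ^ (1 / p) := ENNReal.mul_rpow_of_nonneg _ _ (le_of_lt hip0)
  -- combine
  have key := hineq N hN f x hfmeas hident hint
  have main : ENNReal.ofReal (1 / 2) * c ^ (1 / p) * ENNReal.ofReal (Real.sqrt (radAvg x))
      ≤ ENNReal.ofReal C * (c ^ (1 / p) * T ^ (1 / p)) :=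
    le_trans (mul_le_mul_left hsup _) (le_trans key (mul_le_mul_right hlp _))
  have hcp0 : c ^ (1 / p) ≠ 0 := (ENNReal.rpow_pos hc0 hctop.ne).ne'
  have hcpt : c ^ (1 / p) ≠ ∞ := (ENNReal.rpow_lt_top_of_nonneg (le_of_lt hip0) hctop.ne).ne
  have main2 : ENNReal.ofReal (1 / 2) * ENNReal.ofReal (Real.sqrt (radAvg x))
      ≤ ENNReal.ofReal C * T ^ (1 / p) := by
    rw [← ENNReal.mul_le_mul_iff_right hcp0 hcpt]
    calc c ^ (1 / p) * (ENNReal.ofReal (1 / 2) * ENNReal.ofReal (Real.sqrt (radAvg x)))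
        = ENNReal.ofReal (1 / 2) * c ^ (1 / p) * ENNReal.ofReal (Real.sqrt (radAvg x)) := by
          ring
      _ ≤ ENNReal.ofReal C * (c ^ (1 / p) * T ^ (1 / p)) := main
      _ = c ^ (1 / p) * (ENNReal.ofReal C * T ^ (1 / p)) := by ring
  -- rewrite T in terms of ofReal
  have hTof : T ^ (1 / p) = ENNReal.ofReal ((∑ n, ‖x n‖ ^ p) ^ (1 / p)) := by
    rw [hT]
    rw [← ENNReal.ofReal_rpow_of_nonneg (Finset.sum_nonneg fun n _ => by positivity)
      (le_of_lt hip0)]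
    congr 1
    rw [ENNReal.ofReal_sum_of_nonneg (fun n _ => by positivity)]
    refine Finset.sum_congr rfl fun n _ => ?_
    rw [← ENNReal.ofReal_rpow_of_nonneg (norm_nonneg _) (le_of_lt hp0),
      ofReal_norm, enorm_eq_nnnorm]
  rw [hTof, ← ENNReal.ofReal_mul (by norm_num), ← ENNReal.ofReal_mul hC] at main2
  have hfin := (ENNReal.ofReal_le_ofReal_iff (by positivity)).mp main2
  nlinarith [Real.sqrt_nonneg (radAvg x), hfin]
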